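/- arXiv:1611.07242 — 2 statements merged into one kernel-verified Lean document; each statement's English description precedes it below -/
import Mathlib

section
/- Let P(θ) = Σ_{T⊆[n]} p_T θ^T be an affine polynomial with P(0)=1, p_i > 0 for all i, and suppose γ_{(P,λ)} exists for λ > 0. Then for all v ∈ (0,1]ⁿ, setting θ_i = (v_i^{-1/λ} - 1)/p_i, the Laplace transform satisfies [P(θ)]^{-λ} = v^{[n]} · [1 + Σ_{T⊆[n], |T|>1} (-1)^{|T|} P(-(1/p)·1_T) · Π_{t∈T}(1 - v_t^{1/λ})]^{-λ}, so that the Laplace copula of γ_{(P,λ)} is C(v) = v^{[n]}·[1 + Σ_{|T|>1} (-1)^{|T|} P(-(1/p)·1_T) Π_{t∈T}(1 - v_t^{1/λ})]^{-λ}. -/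
/-!
Put `u i = v i ^ (1 / λ)` and `w i = 1 - u i`. Then `u i * θ i = w i / p {i}`, so
`(∏ u) * P(θ) = ∑ S, p S * ∏_{i ∈ S} (w i / p {i}) * ∏_{i ∉ S} (1 - w i)`,
a multiaffine polynomial in `w` whose coefficient of `w^T` is `(-1)^|T| * P(-(1/p) 1_T)`.
That coefficient is `P(0) = 1` for `T = ∅` and `1 + p {i} * (-1 / p {i}) = 0` for `T = {i}`,
and raising `P(θ) = (∏ u)⁻¹ * (1 + …)` to the power `-λ` turns `(∏ u)⁻¹` into `∏ v`.
-/

open Finset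

section CommRing

variable {ι R : Type*} [Fintype ι] [DecidableEq ι] [CommRing R]

def affinePoly (p : Finset ι → R) (θ : ι → R) : R :=
  ∑ T, p T * ∏ i ∈ T, θ i

theorem affinePoly_ite_mem (p : Finset ι → R) (T : Finset ι) (b : ι → R) :
    affinePoly p (fun i => if i ∈ T then b i else 0) =
      ∑ S ∈ T.powerset, p S * ∏ i ∈ S, b i := by
  rw [affinePoly, ← filter_subset_univ, sum_filter]
  refine sum_congr rfl fun S _ => ?_
  rw [prod_ite_zero]
  split_ifs with h h' h'
  · rfl
  · exact absurd (fun i hi => h i hi) h'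
  · exact absurd (fun i hi => h' hi) h
  · rw [mul_zero]

theorem prod_mul_prod_compl_one_sub (S : Finset ι) (a w : ι → R) :
    (∏ i ∈ S, a i * w i) * ∏ i ∈ Sᶜ, (1 - w i) =
      ∑ T with S ⊆ T, (-1) ^ #T * (∏ i ∈ S, -a i) * ∏ i ∈ T, w i := by
  set c : ι → R := fun i => if i ∈ S then -a i else 1
  set g : ι → R := fun i => if i ∉ S then 1 else 0
  -- expanding this product, the factor `∏ i ∈ Tᶜ, g i` vanishes unless `S ⊆ T`
  have hsplit :
      ∏ i, (c i * -w i + g i) = (∏ i ∈ S, a i * w i) * ∏ i ∈ Sᶜ, (1 - w i) := by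
    rw [← prod_mul_prod_compl S]
    congr 1 <;> refine prod_congr rfl fun i hi => ?_
    · simp [c, g, hi]
    · simp only [c, g, mem_compl.1 hi, ite_not, ↓reduceIte, mul_neg, one_mul]
      ring
  rw [← hsplit, prod_add, Finset.powerset_univ, sum_filter]
  refine sum_congr rfl fun T _ => ?_
  have hsub : (∀ i ∈ Tᶜ, i ∉ S) ↔ S ⊆ T := by
    simp only [mem_compl]
    exact ⟨fun h i hi => by_contra fun hiT => h i hiT hi, fun h i hiT hi => hiT (h hi)⟩
  rw [← compl_eq_univ_sdiff, prod_ite_zero]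
  simp only [hsub]
  split_ifs with hST
  · rw [prod_const_one, mul_one, prod_mul_distrib, prod_ite_mem, inter_eq_right.2 hST,
      prod_neg w]
    ring
  · rw [mul_zero]

theorem sum_mul_prod_mul_prod_compl_one_sub (p : Finset ι → R) (a w : ι → R) :
    ∑ S, p S * ((∏ i ∈ S, a i * w i) * ∏ i ∈ Sᶜ, (1 - w i)) =
      ∑ T, (-1) ^ #T * affinePoly p (fun i => if i ∈ T then -a i else 0) *
        ∏ i ∈ T, w i := by
  simp_rw [prod_mul_prod_compl_one_sub, mul_sum, affinePoly_ite_mem]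
  rw [sum_comm' (t' := univ) (s' := fun T => T.powerset) fun S T => by simp]
  refine sum_congr rfl fun T _ => ?_
  rw [mul_sum, sum_mul]
  exact sum_congr rfl fun S _ => by ring

end CommRing

section Field

variable {ι F : Type*} [Fintype ι] [DecidableEq ι] [Field F]

theorem prod_mul_affinePoly_inv_sub_one_div (p : Finset ι → F) (c u : ι → F)
    (hu : ∀ i, u i ≠ 0) :
    (∏ i, u i) * affinePoly p (fun i => ((u i)⁻¹ - 1) / c i) =
      ∑ T, (-1) ^ #T * affinePoly p (fun i => if i ∈ T then -(1 / c i) else 0) *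
        ∏ i ∈ T, (1 - u i) := by
  rw [← sum_mul_prod_mul_prod_compl_one_sub, affinePoly, mul_sum]
  refine sum_congr rfl fun S _ => ?_
  have hfactor : ∀ i, u i * (((u i)⁻¹ - 1) / c i) = 1 / c i * (1 - u i) := fun i => by
    field_simp [hu i]
  simp only [sub_sub_cancel]
  rw [← prod_mul_prod_compl S u, ← prod_congr rfl fun i _ => hfactor i, prod_mul_distrib]
  ring

theorem sum_affinePoly_eq_one_add_sum_one_lt_card (p : Finset ι → F) (hp₀ : p ∅ = 1)
    (hp₁ : ∀ i, p {i} ≠ 0) (w : ι → F) :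
    ∑ T, (-1) ^ #T * affinePoly p (fun i => if i ∈ T then -(1 / p {i}) else 0) *
        ∏ i ∈ T, w i =
      1 + ∑ T with 1 < #T,
        (-1) ^ #T * affinePoly p (fun i => if i ∈ T then -(1 / p {i}) else 0) *
          ∏ i ∈ T, w i := by
  have h₀ : affinePoly p (fun i => if i ∈ (∅ : Finset ι) then -(1 / p {i}) else 0) = 1 := by
    rw [affinePoly_ite_mem]; simp [hp₀]
  have h₁ : ∀ j,
      affinePoly p (fun i => if i ∈ ({j} : Finset ι) then -(1 / p {i}) else 0) = 0 := by
    intro j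
    have hpow : ({j} : Finset ι).powerset = {∅, {j}} := by
      ext S; simp [subset_singleton_iff]
    rw [affinePoly_ite_mem, hpow, sum_pair (singleton_ne_empty j).symm]
    simp [hp₀, hp₁ j]
  rw [← sum_filter_add_sum_filter_not univ (fun T => 1 < #T), add_comm]
  congr 1
  rw [sum_eq_single_of_mem ∅ (by simp)]
  · rw [h₀, card_empty, pow_zero, prod_empty, one_mul, mul_one]
  · intro T hT hne
    obtain ⟨j, rfl⟩ : ∃ j, T = {j} := card_eq_one.1 (by
      have := card_pos.2 (nonempty_iff_ne_empty.2 hne)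
      simp only [mem_filter, mem_univ, true_and, not_lt] at hT
      omega)
    rw [h₁, mul_zero, zero_mul]

end Field

-- `Real.mul_rpow` needs `0 ≤ x`, but the base `1 + ∑ …` in the theorem may be negative.
theorem Real.mul_rpow_of_pos_right (x : ℝ) {y : ℝ} (hy : 0 < y) (z : ℝ) :
    (x * y) ^ z = x ^ z * y ^ z := by
  rcases le_or_gt 0 x with hx | hx
  · exact Real.mul_rpow hx hy.le
  · rw [Real.rpow_def_of_neg (mul_neg_of_neg_of_pos hx hy), Real.rpow_def_of_neg hx,
      Real.rpow_def_of_pos hy, Real.log_mul hx.ne hy.ne', add_mul, Real.exp_add]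
    ring

open Real Set

theorem laplace_copula_of_multivariate_gamma
    {n : ℕ} (p : Finset (Fin n) → ℝ) (lam : ℝ)
    (hpe : p ∅ = 1) (hpi : ∀ i : Fin n, 0 < p {i}) (hlam : 0 < lam)
    (P : (Fin n → ℝ) → ℝ)
    (hP : ∀ θ : Fin n → ℝ, P θ = ∑ T : Finset (Fin n), p T * ∏ i ∈ T, θ i) :
    ∀ v : Fin n → ℝ, (∀ i, v i ∈ Ioc (0:ℝ) 1) →
      (P (fun i => (v i ^ (-(1 / lam)) - 1) / p {i})) ^ (-lam) =
        (∏ i : Fin n, v i) *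
          (1 + ∑ T ∈ Finset.univ.filter (fun T : Finset (Fin n) => 1 < T.card),
              (-1 : ℝ) ^ T.card *
                P (fun i => if i ∈ T then -(1 / p {i}) else 0) *
                ∏ t ∈ T, (1 - v t ^ (1 / lam))) ^ (-lam) := by
  intro v hv
  obtain rfl : P = affinePoly p := funext hP
  set u : Fin n → ℝ := fun i => v i ^ (1 / lam)
  have hv₀ : ∀ i, 0 < v i := fun i => (hv i).1
  have hu₀ : 0 < ∏ i, u i := prod_pos fun i _ => rpow_pos_of_pos (hv₀ i) _
  have hθ : (fun i => (v i ^ (-(1 / lam)) - 1) / p {i}) = fun i => ((u i)⁻¹ - 1) / p {i} :=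
    funext fun i => by rw [rpow_neg (hv₀ i).le]
  have hv_prod : ∏ i, v i = (∏ i, u i) ^ lam := by
    rw [← finsetProd_rpow _ _ fun i _ => (rpow_pos_of_pos (hv₀ i) _).le]
    exact prod_congr rfl fun i _ => by
      rw [← rpow_mul (hv₀ i).le, one_div_mul_cancel hlam.ne', rpow_one]
  have hP_eq := prod_mul_affinePoly_inv_sub_one_div p (fun i => p {i}) u
    fun i => (rpow_pos_of_pos (hv₀ i) _).ne'
  rw [sum_affinePoly_eq_one_add_sum_one_lt_card p hpe (fun i => (hpi i).ne'),
    ← eq_inv_mul_iff_mul_eq₀ hu₀.ne'] at hP_eq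
  rw [hθ, hP_eq, mul_comm, mul_rpow_of_pos_right _ (inv_pos.2 hu₀), inv_rpow hu₀.le,
    ← rpow_neg hu₀.le, neg_neg, hv_prod]
  exact mul_comm _ _
end

section
/- The Spearman's rho of the copula C(v₁,v₂) = v₁v₂[1 - r(1-v₁^{1/λ₁})(1-v₂^{1/λ₂})]^{-λ}, with λ₁ ≥ λ > 0, λ₂ ≥ λ, 0 ≤ r < 1, equals ρ_S = 3[₃F₂(1,1,λ; 2λ₁+1, 2λ₂+1; r) - 1] = [3λ/((2λ₁+1)(2λ₂+1))] · r · ₃F₂(1,2,λ+1; 2λ₁+2, 2λ₂+2; r). -/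
open MeasureTheory Real Set

noncomputable def poch (a : ℝ) (n : ℕ) : ℝ := (ascPochhammer ℝ n).eval a

/-- The generalized hypergeometric function `₃F₂(a₁,a₂,a₃;b₁,b₂;z)`. -/
noncomputable def F32 (a₁ a₂ a₃ b₁ b₂ z : ℝ) : ℝ :=
  ∑' k : ℕ, (poch a₁ k * poch a₂ k * poch a₃ k) / (poch b₁ k * poch b₂ k) *
    z ^ k / k.factorial

/-!
Write `a = 1 - u ^ (1/λ₁)` and `b = 1 - v ^ (1/λ₂)`, both in `[0, 1]`. The binomial
series `(1 - r a b) ^ (-λ) = ∑ (λ)ₖ / k! · rᵏ aᵏ bᵏ` separates the variables, and since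
every term is bounded by `|(λ)ₖ / k! · rᵏ|` (summable as `|r| < 1`) it may be integrated
termwise. This leaves the Beta-type integrals `∫₀¹ u (1 - u ^ (1/L))ᵏ du = k! / (2 (2L+1)ₖ)`,
so that `4 ∫∫ C = ₃F₂(1, 1, λ; 2λ₁+1, 2λ₂+1; r)`. The second expression is the same series
with the constant term split off and the index shifted by one.
-/

section Pochhammer

open Nat

lemma poch_zero (a : ℝ) : poch a 0 = 1 := by simp [poch]

lemma poch_succ (a : ℝ) (n : ℕ) : poch a (n + 1) = poch a n * (a + n) :=
  ascPochhammer_succ_eval n a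

lemma poch_succ_left (a : ℝ) (n : ℕ) : poch a (n + 1) = a * poch (a + 1) n := by
  simp [poch, ascPochhammer_succ_left, Polynomial.eval_comp]

lemma poch_pos {a : ℝ} (ha : 0 < a) (n : ℕ) : 0 < poch a n := ascPochhammer_pos n a ha

lemma one_poch (n : ℕ) : poch 1 n = n ! := ascPochhammer_eval_one ℝ n

lemma two_poch (n : ℕ) : poch 2 n = (n + 1)! := by
  have h := factorial_mul_ascPochhammer ℝ 1 n
  norm_num at h
  rw [poch, h, add_comm]

end Pochhammer

lemma choose_add_sub_one_eq_poch_div (a : ℝ) (n : ℕ) :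
    Ring.choose (a + n - 1) n = poch a n / n.factorial := by
  simp only [Ring.choose_eq_smul, Polynomial.descPochhammer_smeval_eq_ascPochhammer,
    Polynomial.ascPochhammer_smeval_cast, Polynomial.ascPochhammer_smeval_eq_eval]
  rw [smul_eq_mul, poch, div_eq_inv_mul]
  ring_nf

theorem hasSum_poch_div_factorial_mul_pow (a : ℝ) {x : ℝ} (hx : |x| < 1) :
    HasSum (fun n => poch a n / n.factorial * x ^ n) ((1 - x) ^ (-a)) := by
  have h := (one_div_one_sub_rpow_hasFPowerSeriesOnBall_zero a).hasSum
    (y := x) (by simpa [enorm_eq_nnnorm, ← NNReal.coe_lt_coe] using hx)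
  simp only [FormalMultilinearSeries.ofScalars_apply_eq, zero_add,
    choose_add_sub_one_eq_poch_div, smul_eq_mul] at h
  rwa [rpow_neg (by linarith [le_abs_self x]), inv_eq_one_div]

section Integrals

variable {p q : ℝ}

lemma continuous_rpow_mul_one_sub_rpow_pow (hp : 0 ≤ p) (hq : 0 ≤ q) (k : ℕ) :
    Continuous fun u : ℝ => u ^ p * (1 - u ^ q) ^ k :=
  (continuous_rpow_const hp).mul ((continuous_const.sub (continuous_rpow_const hq)).pow k)

theorem integral_rpow_mul_one_sub_rpow_pow (hp : 0 ≤ p) (hq : 0 < q) (k : ℕ) :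
    ∫ u in (0:ℝ)..1, u ^ p * (1 - u ^ q) ^ k =
      k.factorial / (q * poch ((p + 1) / q) (k + 1)) := by
  induction k generalizing p with
  | zero =>
    have hp1 : p + 1 ≠ 0 := by positivity
    simp only [pow_zero, mul_one, zero_add, poch_succ, poch_zero, CharP.cast_eq_zero,
      Nat.factorial_zero, Nat.cast_one]
    rw [integral_rpow (Or.inl (by linarith)), one_rpow, zero_rpow hp1]
    field_simp
    ring
  | succ k ih =>
    have hsplit : ∫ u in (0:ℝ)..1, u ^ p * (1 - u ^ q) ^ (k + 1) =
        (∫ u in (0:ℝ)..1, u ^ p * (1 - u ^ q) ^ k) -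
          ∫ u in (0:ℝ)..1, u ^ (p + q) * (1 - u ^ q) ^ k := by
      rw [← intervalIntegral.integral_sub
        ((continuous_rpow_mul_one_sub_rpow_pow hp hq.le k).intervalIntegrable _ _)
        ((continuous_rpow_mul_one_sub_rpow_pow (by positivity) hq.le k).intervalIntegrable
          _ _)]
      refine intervalIntegral.integral_congr fun u hu => ?_
      rw [uIcc_of_le zero_le_one] at hu
      simp only [rpow_add' hu.1 (by positivity : p + q ≠ 0), pow_succ]
      ring
    have hshift : (p + q + 1) / q = (p + 1) / q + 1 := by field_simp; ring
    rw [hsplit, ih hp, ih (by positivity), hshift]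
    set s := (p + 1) / q
    have hs : 0 < s := by positivity
    have hR := poch_pos hs (k + 2)
    have hP : poch s (k + 1) = poch s (k + 2) / (s + (k + 1)) := by
      rw [poch_succ s (k + 1)]; push_cast; field_simp
    have hQ : poch (s + 1) (k + 1) = poch s (k + 2) / s := by
      rw [poch_succ_left s (k + 1)]; field_simp
    rw [hP, hQ, Nat.factorial_succ]
    field_simp
    push_cast
    ring

end Integrals

theorem intervalIntegral.hasSum_integral_of_norm_le {F : ℕ → ℝ → ℝ} {f : ℝ → ℝ}
    {c : ℕ → ℝ} {a b : ℝ} (hab : a ≤ b) (hc : Summable c) (hF : ∀ k, ContinuousOn (F k) (Icc a b))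
    (hFc : ∀ k, ∀ t ∈ Icc a b, ‖F k t‖ ≤ c k)
    (hFf : ∀ t ∈ Icc a b, HasSum (fun k => F k t) (f t)) :
    HasSum (fun k => ∫ t in a..b, F k t) (∫ t in a..b, f t) := by
  rw [← uIcc_of_le hab] at hF hFc hFf
  exact intervalIntegral.hasSum_integral_of_dominated_convergence (fun k _ => c k)
    (fun k => ((hF k).mono uIoc_subset_uIcc).aestronglyMeasurable measurableSet_uIoc)
    (fun k => .of_forall fun t ht => hFc k t (uIoc_subset_uIcc ht))
    (.of_forall fun _ _ => hc) intervalIntegrable_const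
    (.of_forall fun t ht => hFf t (uIoc_subset_uIcc ht))

section OneSubRpow

variable {p : ℝ}

lemma one_sub_rpow_mem_Icc (hp : 0 ≤ p) {u : ℝ} (hu : u ∈ Icc 0 1) : 1 - u ^ p ∈ Icc 0 1 :=
  ⟨sub_nonneg.2 (rpow_le_one hu.1 hu.2 hp), sub_le_self _ (rpow_nonneg hu.1 p)⟩

lemma mul_one_sub_rpow_pow_mem_Icc (hp : 0 ≤ p) {u : ℝ} (hu : u ∈ Icc 0 1) (k : ℕ) :
    u * (1 - u ^ p) ^ k ∈ Icc 0 1 := by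
  obtain ⟨h0, h1⟩ := one_sub_rpow_mem_Icc hp hu
  exact ⟨by have := hu.1; positivity, mul_le_one₀ hu.2 (by positivity) (pow_le_one₀ h0 h1)⟩

lemma continuous_mul_one_sub_rpow_pow (hp : 0 ≤ p) (k : ℕ) :
    Continuous fun u : ℝ => u * (1 - u ^ p) ^ k := by
  simpa using continuous_rpow_mul_one_sub_rpow_pow zero_le_one hp k

lemma integral_mul_one_sub_rpow_pow_mem_Icc (hp : 0 ≤ p) (k : ℕ) :
    ∫ u in (0:ℝ)..1, u * (1 - u ^ p) ^ k ∈ Icc 0 1 := by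
  have hmem : ∀ u ∈ Icc (0:ℝ) 1, u * (1 - u ^ p) ^ k ∈ Icc 0 1 :=
    fun u hu => mul_one_sub_rpow_pow_mem_Icc hp hu k
  refine ⟨intervalIntegral.integral_nonneg zero_le_one fun u hu => (hmem u hu).1, ?_⟩
  calc ∫ u in (0:ℝ)..1, u * (1 - u ^ p) ^ k ≤ ∫ _ in (0:ℝ)..1, (1:ℝ) :=
        intervalIntegral.integral_mono_on zero_le_one
          ((continuous_mul_one_sub_rpow_pow hp k).intervalIntegrable _ _)
          intervalIntegrable_const fun u hu => (hmem u hu).2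
    _ = 1 := by simp

theorem integral_mul_one_sub_rpow_inv_pow {L : ℝ} (hL : 0 < L) (k : ℕ) :
    ∫ u in (0:ℝ)..1, u * (1 - u ^ (1 / L)) ^ k = k.factorial / (2 * poch (2 * L + 1) k) := by
  have h := integral_rpow_mul_one_sub_rpow_pow zero_le_one (one_div_pos.2 hL) k
  simp only [rpow_one] at h
  rw [h, poch_succ_left, show (1 + 1) / (1 / L) = 2 * L by field_simp; ring]
  have := poch_pos (show 0 < 2 * L + 1 by linarith) k
  field_simp

end OneSubRpow

section Hypergeometric

noncomputable def F32Term (a₁ a₂ a₃ b₁ b₂ z : ℝ) (k : ℕ) : ℝ :=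
  (poch a₁ k * poch a₂ k * poch a₃ k) / (poch b₁ k * poch b₂ k) * z ^ k / k.factorial

variable {a b₁ b₂ z : ℝ}

lemma F32_eq_tsum_F32Term (a₁ a₂ a₃ b₁ b₂ z : ℝ) :
    F32 a₁ a₂ a₃ b₁ b₂ z = ∑' k, F32Term a₁ a₂ a₃ b₁ b₂ z k := rfl

lemma F32Term_one_one_succ (k : ℕ) :
    F32Term 1 1 a b₁ b₂ z (k + 1) =
      a * z / (b₁ * b₂) * F32Term 1 2 (a + 1) (b₁ + 1) (b₂ + 1) z k := by
  simp only [F32Term, poch_succ_left, one_add_one_eq_two, one_poch, two_poch, Nat.factorial_succ]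
  have := k.factorial_pos
  push_cast
  field_simp
  ring

theorem F32_one_one_eq_one_add (h : Summable (F32Term 1 1 a b₁ b₂ z)) :
    F32 1 1 a b₁ b₂ z =
      1 + a * z / (b₁ * b₂) * F32 1 2 (a + 1) (b₁ + 1) (b₂ + 1) z := by
  rw [F32_eq_tsum_F32Term, h.tsum_eq_zero_add, F32_eq_tsum_F32Term, ← tsum_mul_left]
  congr 1
  · simp [F32Term, poch_zero]
  · exact tsum_congr F32Term_one_one_succ

end Hypergeometric

lemma norm_mul_mul_le_norm_of_mem_Icc (c : ℝ) {x y : ℝ} (hx : x ∈ Icc 0 1)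
    (hy : y ∈ Icc 0 1) :
    ‖c * x * y‖ ≤ ‖c‖ := by
  rw [norm_mul, norm_mul, mul_assoc, Real.norm_of_nonneg hx.1, Real.norm_of_nonneg hy.1]
  exact mul_le_of_le_one_right (norm_nonneg c) (mul_le_one₀ hx.2 hy.1 hy.2)

theorem hasSum_mul_mul_one_sub_mul_mul_rpow_neg (lam u v : ℝ) {r x y : ℝ} (hr : |r| < 1)
    (hx : x ∈ Icc 0 1) (hy : y ∈ Icc 0 1) :
    HasSum (fun k => poch lam k / k.factorial * r ^ k * (u * x ^ k) * (v * y ^ k))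
      (u * v * (1 - r * x * y) ^ (-lam)) := by
  have hrxy : |r * x * y| < 1 := by
    rw [abs_mul, abs_mul, abs_of_nonneg hx.1, abs_of_nonneg hy.1]
    exact (mul_le_of_le_one_right (mul_nonneg (abs_nonneg r) hx.1) hy.2 |>.trans
      (mul_le_of_le_one_right (abs_nonneg r) hx.2)).trans_lt hr
  have hterm : ∀ k, poch lam k / k.factorial * r ^ k * (u * x ^ k) * (v * y ^ k) =
      u * v * (poch lam k / k.factorial * (r * x * y) ^ k) :=
    fun k => by rw [mul_pow, mul_pow]; ring
  simpa only [hterm] using (hasSum_poch_div_factorial_mul_pow lam hrxy).mul_left (u * v)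

theorem F32Term_one_one_eq_four_mul_integral_mul_integral {lam L₁ L₂ r : ℝ} (hL₁ : 0 < L₁)
    (hL₂ : 0 < L₂) (k : ℕ) :
    F32Term 1 1 lam (2 * L₁ + 1) (2 * L₂ + 1) r k =
      4 * ((poch lam k / k.factorial * r ^ k * ∫ u in (0:ℝ)..1, u * (1 - u ^ (1 / L₁)) ^ k) *
        ∫ v in (0:ℝ)..1, v * (1 - v ^ (1 / L₂)) ^ k) := by
  have := poch_pos (show 0 < 2 * L₁ + 1 by linarith) k
  have := poch_pos (show 0 < 2 * L₂ + 1 by linarith) k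
  have := k.factorial_pos
  simp only [F32Term, integral_mul_one_sub_rpow_inv_pow hL₁,
    integral_mul_one_sub_rpow_inv_pow hL₂, one_poch]
  field_simp
  ring

theorem hasSum_F32Term_four_mul_integral_integral {lam L₁ L₂ r : ℝ} (hL₁ : 0 < L₁)
    (hL₂ : 0 < L₂) (hr : |r| < 1) :
    HasSum (F32Term 1 1 lam (2 * L₁ + 1) (2 * L₂ + 1) r)
      (4 * ∫ u in (0:ℝ)..1, ∫ v in (0:ℝ)..1,
        u * v * (1 - r * (1 - u ^ (1 / L₁)) * (1 - v ^ (1 / L₂))) ^ (-lam)) := by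
  have hp₁ : 0 ≤ 1 / L₁ := by positivity
  have hp₂ : 0 ≤ 1 / L₂ := by positivity
  set w : ℕ → ℝ := fun k => poch lam k / k.factorial * r ^ k
  have hw : Summable fun k => ‖w k‖ := (hasSum_poch_div_factorial_mul_pow lam hr).summable.norm
  have hpoint : ∀ u ∈ Icc (0:ℝ) 1, ∀ v ∈ Icc (0:ℝ) 1,
      HasSum (fun k => w k * (u * (1 - u ^ (1 / L₁)) ^ k) * (v * (1 - v ^ (1 / L₂)) ^ k))
        (u * v * (1 - r * (1 - u ^ (1 / L₁)) * (1 - v ^ (1 / L₂))) ^ (-lam)) :=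
    fun u hu v hv => hasSum_mul_mul_one_sub_mul_mul_rpow_neg lam u v hr
      (one_sub_rpow_mem_Icc hp₁ hu) (one_sub_rpow_mem_Icc hp₂ hv)
  have hinner : ∀ u ∈ Icc (0:ℝ) 1,
      HasSum (fun k => w k * (u * (1 - u ^ (1 / L₁)) ^ k) *
          ∫ v in (0:ℝ)..1, v * (1 - v ^ (1 / L₂)) ^ k)
        (∫ v in (0:ℝ)..1,
          u * v * (1 - r * (1 - u ^ (1 / L₁)) * (1 - v ^ (1 / L₂))) ^ (-lam)) := by
    intro u hu
    simp only [← intervalIntegral.integral_const_mul]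
    refine intervalIntegral.hasSum_integral_of_norm_le zero_le_one hw
      (fun k => (continuous_const.mul (continuous_mul_one_sub_rpow_pow hp₂ k)).continuousOn)
      (fun k v hv => ?_) (hpoint u hu)
    exact norm_mul_mul_le_norm_of_mem_Icc _ (mul_one_sub_rpow_pow_mem_Icc hp₁ hu k)
      (mul_one_sub_rpow_pow_mem_Icc hp₂ hv k)
  have houter : HasSum (fun k => ∫ u in (0:ℝ)..1, w k * (u * (1 - u ^ (1 / L₁)) ^ k) *
        ∫ v in (0:ℝ)..1, v * (1 - v ^ (1 / L₂)) ^ k)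
      (∫ u in (0:ℝ)..1, ∫ v in (0:ℝ)..1,
        u * v * (1 - r * (1 - u ^ (1 / L₁)) * (1 - v ^ (1 / L₂))) ^ (-lam)) :=
    intervalIntegral.hasSum_integral_of_norm_le zero_le_one hw
      (fun k => ((continuous_const.mul (continuous_mul_one_sub_rpow_pow hp₁ k)).mul
        continuous_const).continuousOn)
      (fun k u hu => norm_mul_mul_le_norm_of_mem_Icc _
        (mul_one_sub_rpow_pow_mem_Icc hp₁ hu k)
        (integral_mul_one_sub_rpow_pow_mem_Icc hp₂ k))
      hinner
  rw [funext (F32Term_one_one_eq_four_mul_integral_mul_integral (lam := lam) (r := r) hL₁ hL₂)]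
  simpa only [intervalIntegral.integral_mul_const, intervalIntegral.integral_const_mul]
    using houter.mul_left 4

theorem spearman_rho_of_copula (lam lam₁ lam₂ r : ℝ)
    (hlam : 0 < lam) (hlam₁ : lam ≤ lam₁) (hlam₂ : lam ≤ lam₂)
    (hr0 : 0 ≤ r) (hr1 : r < 1)
    (C : ℝ → ℝ → ℝ)
    (hC : ∀ v₁ v₂ : ℝ, C v₁ v₂ =
      v₁ * v₂ * (1 - r * (1 - v₁ ^ (1 / lam₁)) * (1 - v₂ ^ (1 / lam₂))) ^ (-lam)) :
    (12 * (∫ u in (0:ℝ)..1, ∫ v in (0:ℝ)..1, C u v) - 3 =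
        3 * (F32 1 1 lam (2 * lam₁ + 1) (2 * lam₂ + 1) r - 1)) ∧
    (3 * (F32 1 1 lam (2 * lam₁ + 1) (2 * lam₂ + 1) r - 1) =
        3 * lam / ((2 * lam₁ + 1) * (2 * lam₂ + 1)) * r *
          F32 1 2 (lam + 1) (2 * lam₁ + 2) (2 * lam₂ + 2) r) := by
  have h := hasSum_F32Term_four_mul_integral_integral (lam := lam)
    (hlam.trans_le hlam₁) (hlam.trans_le hlam₂) (abs_lt.2 ⟨by linarith, hr1⟩)
  simp only [← hC] at h
  have hF : F32 1 1 lam (2 * lam₁ + 1) (2 * lam₂ + 1) r =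
      4 * ∫ u in (0:ℝ)..1, ∫ v in (0:ℝ)..1, C u v := h.tsum_eq
  refine ⟨by rw [hF]; ring, ?_⟩
  rw [F32_one_one_eq_one_add h.summable, show 2 * lam₁ + 1 + 1 = 2 * lam₁ + 2 by ring,
    show 2 * lam₂ + 1 + 1 = 2 * lam₂ + 2 by ring]
  ring
end
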